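/- Let T be a tree with a vertex of degree d, and let s ≥ 1. Every straight-line drawing of T with spanning ratio at most s has edge-length ratio at least 2^{⌊(d−1)/(48 s²)⌋}; in particular the edge-length ratio is 2^{Ω(d/s²)}. -/

import Mathlib

noncomputable def wlen {V : Type*} {G : SimpleGraph V} (ρ : V → EuclideanSpace ℝ (Fin 2)) :
    ∀ {u v : V}, G.Walk u v → ℝ
  | _, _, SimpleGraph.Walk.nil => 0
  | u, _, SimpleGraph.Walk.cons (v := b) _ p => dist (ρ u) (ρ b) + wlen ρ p

/-!
Let the edges at `u` have lengths between `m` and `M`. In a tree every path between two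
neighbours `v, w` of `u` passes through `u`, so spanning ratio `s` gives
`|uv| + |uw| ≤ s |vw|`. If `M < 2^F m`, the `d` neighbours fall into `F` dyadic annuli
`R ≤ |uv| < 2R`, so one annulus contains more than `48 s²` of them. These lie in a disc of
radius `2R` and are pairwise at distance at least `2R/s`, so a grid of cells of side `R/s`
holds at most one of them per cell: there are at most `(4s + 2)² ≤ 36 s² < 48 s²` of them.
-/

open Finset SimpleGraph

section WalkLength

variable {V : Type*} {G : SimpleGraph V} (ρ : V → EuclideanSpace ℝ (Fin 2))

lemma wlen_append {u v w : V} (p : G.Walk u v) (q : G.Walk v w) :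
    wlen ρ (p.append q) = wlen ρ p + wlen ρ q := by
  induction p with
  | nil => simp [wlen]
  | cons h p ih => rw [Walk.cons_append, wlen, wlen, ih, add_assoc]

lemma dist_le_wlen {u v : V} (p : G.Walk u v) : dist (ρ u) (ρ v) ≤ wlen ρ p := by
  induction p with
  | nil => simp [wlen]
  | cons h p ih => exact (dist_triangle _ _ _).trans (by rw [wlen]; gcongr)

end WalkLength

lemma SimpleGraph.IsAcyclic.mem_support_of_adj_of_adj {V : Type*} {G : SimpleGraph V}
    (hG : G.IsAcyclic) {u v w : V} (hv : G.Adj u v) (hw : G.Adj u w) (hvw : v ≠ w)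
    (p : G.Walk v w) : u ∈ p.support := by
  have hbridge : G.IsBridge s(u, w) := isAcyclic_iff_forall_isBridge.mp hG hw
  have hmem := isBridge_iff_forall_walk_mem_edges.mp hbridge (Walk.cons hv p)
  rw [Walk.edges_cons, List.mem_cons] at hmem
  rcases hmem with h | h
  · exact absurd (Sym2.congr_right.mp h).symm hvw
  · exact p.fst_mem_support_of_mem_edges h

lemma dist_add_dist_le_wlen_of_isAcyclic {V : Type*} {G : SimpleGraph V} (hG : G.IsAcyclic)
    (ρ : V → EuclideanSpace ℝ (Fin 2)) {u v w : V} (hv : G.Adj u v) (hw : G.Adj u w)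
    (hvw : v ≠ w) (p : G.Walk v w) :
    dist (ρ v) (ρ u) + dist (ρ u) (ρ w) ≤ wlen ρ p := by
  classical
  have hu := hG.mem_support_of_adj_of_adj hv hw hvw p
  calc dist (ρ v) (ρ u) + dist (ρ u) (ρ w)
      ≤ wlen ρ (p.takeUntil u hu) + wlen ρ (p.dropUntil u hu) :=
        add_le_add (dist_le_wlen ρ _) (dist_le_wlen ρ _)
    _ = wlen ρ p := by rw [← wlen_append, p.take_spec hu]

lemma exists_dyadic_shell_card_gt {α : Type*} (f : α → ℝ) {m : ℝ} (hm : 0 < m) (n : ℕ)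
    {F : ℕ} (A : Finset α) (hf : ∀ a ∈ A, m ≤ f a ∧ f a < 2 ^ F * m) (hA : F * n < #A) :
    ∃ R > 0, n < #{a ∈ A | R ≤ f a ∧ f a < 2 * R} := by
  induction F generalizing A with
  | zero =>
    obtain ⟨a, ha⟩ := card_pos.mp (by omega : 0 < #A)
    have := hf a ha
    rw [pow_zero, one_mul] at this
    exact absurd this.2 this.1.not_gt
  | succ F ih =>
    by_cases hhigh : n < #{a ∈ A | ¬ f a < 2 ^ F * m}
    · refine ⟨2 ^ F * m, by positivity, hhigh.trans_le (card_le_card fun a ha => ?_)⟩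
      rw [mem_filter, not_lt] at ha
      rw [mem_filter, ← mul_assoc, ← pow_succ']
      exact ⟨ha.1, ha.2, (hf a ha.1).2⟩
    · have hsplit := card_filter_add_card_filter_not (s := A) (fun a => f a < 2 ^ F * m)
      obtain ⟨R, hR, hcard⟩ := ih {a ∈ A | f a < 2 ^ F * m}
        (fun a ha => ⟨(hf a (mem_filter.mp ha).1).1, (mem_filter.mp ha).2⟩)
        (by rw [add_mul, one_mul] at hA; omega)
      exact ⟨R, hR, hcard.trans_le (card_le_card (filter_subset_filter _ (filter_subset _ _)))⟩

lemma EuclideanSpace.dist_lt_two_mul_of_forall_dist_apply_lt {x y : EuclideanSpace ℝ (Fin 2)}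
    {c : ℝ} (h : ∀ i, dist (x i) (y i) < c) : dist x y < 2 * c := by
  have h0 := h 0
  have h1 := h 1
  have hc : 0 < c := dist_nonneg.trans_lt h0
  rw [EuclideanSpace.dist_eq, Fin.sum_univ_two, Real.sqrt_lt' (by positivity)]
  nlinarith [dist_nonneg (x := x 0) (y := y 0), dist_nonneg (x := x 1) (y := y 1)]

lemma card_Icc_floor_floor_le {y z : ℝ} (h : y ≤ z) : (#(Icc ⌊y⌋ ⌊z⌋) : ℝ) ≤ z - y + 2 := by
  have hcard : (#(Icc ⌊y⌋ ⌊z⌋) : ℤ) = ⌊z⌋ + 1 - ⌊y⌋ :=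
    Int.card_Icc_of_le _ _ (by linarith [Int.floor_mono h])
  have hcard' : (#(Icc ⌊y⌋ ⌊z⌋) : ℝ) = ⌊z⌋ + 1 - ⌊y⌋ := by exact_mod_cast hcard
  rw [hcard']
  linarith [Int.floor_le z, Int.sub_one_lt_floor y]

lemma card_le_of_pairwise_le_dist {ι : Type*} (A : Finset ι) (q : ι → EuclideanSpace ℝ (Fin 2))
    (x : EuclideanSpace ℝ (Fin 2)) {r δ : ℝ} (hδ : 0 < δ) (hr : ∀ i ∈ A, dist (q i) x ≤ r)
    (hsep : (A : Set ι).Pairwise fun i j => δ ≤ dist (q i) (q j)) :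
    (#A : ℝ) ≤ (4 * r / δ + 2) ^ 2 := by
  rcases A.eq_empty_or_nonempty with rfl | ⟨i₀, hi₀⟩
  · simp only [card_empty, Nat.cast_zero]; positivity
  have hr0 : 0 ≤ r := dist_nonneg.trans (hr i₀ hi₀)
  set c := δ / 2 with hc
  have hc0 : 0 < c := by positivity
  -- a grid cell of side `δ / 2` has diameter less than `δ`, so it contains at most one `q i`
  let cell : ι → ℤ × ℤ := fun i => (⌊q i 0 / c⌋, ⌊q i 1 / c⌋)
  let I : Fin 2 → Finset ℤ := fun k => Icc ⌊(x k - r) / c⌋ ⌊(x k + r) / c⌋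
  have hmaps : ∀ i ∈ A, cell i ∈ I 0 ×ˢ I 1 := by
    intro i hi
    have hcoord : ∀ k, |q i k - x k| ≤ r := fun k =>
      (Real.dist_eq _ _ ▸ PiLp.dist_apply_le (q i) x k).trans (hr i hi)
    have hIcc : ∀ k, ⌊q i k / c⌋ ∈ I k := fun k => by
      obtain ⟨hlo, hhi⟩ := abs_le.mp (hcoord k)
      exact mem_Icc.mpr ⟨Int.floor_mono (by gcongr; linarith),
        Int.floor_mono (by gcongr; linarith)⟩
    exact mem_product.mpr ⟨hIcc 0, hIcc 1⟩
  have hinj : Set.InjOn cell A := by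
    intro i hi j hj hij
    by_contra hne
    have hcoord : ∀ k, dist (q i k) (q j k) < c := by
      intro k
      have hfloor : ⌊q i k / c⌋ = ⌊q j k / c⌋ := by
        fin_cases k
        exacts [congrArg Prod.fst hij, congrArg Prod.snd hij]
      have := Int.abs_sub_lt_one_of_floor_eq_floor hfloor
      rwa [← sub_div, abs_div, abs_of_pos hc0, div_lt_one hc0, ← Real.dist_eq] at this
    have := EuclideanSpace.dist_lt_two_mul_of_forall_dist_apply_lt hcoord
    exact (hsep hi hj hne).not_gt (by rwa [hc, mul_div_cancel₀ _ two_ne_zero] at this)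
  have hI : ∀ k, (#(I k) : ℝ) ≤ 4 * r / δ + 2 := by
    intro k
    refine (card_Icc_floor_floor_le (by gcongr; linarith)).trans (le_of_eq ?_)
    rw [hc]
    field_simp
    ring
  calc (#A : ℝ) ≤ #(I 0 ×ˢ I 1) := by exact_mod_cast card_le_card_of_injOn cell hmaps hinj
    _ = #(I 0) * #(I 1) := by rw [card_product, Nat.cast_mul]
    _ ≤ (4 * r / δ + 2) ^ 2 := by rw [sq]; gcongr <;> exact hI _

lemma card_neighbors_in_dyadic_shell_le {V : Type*} {G : SimpleGraph V} (hG : G.IsAcyclic)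
    (ρ : V → EuclideanSpace ℝ (Fin 2)) {s : ℝ} (hs : 0 < s)
    (hspan : ∀ u v : V, u ≠ v → ∃ p : G.Walk u v, wlen ρ p ≤ s * dist (ρ u) (ρ v))
    {u : V} (A : Finset V) (hA : ∀ v ∈ A, G.Adj u v) {R : ℝ} (hR : 0 < R)
    (hshell : ∀ v ∈ A, R ≤ dist (ρ u) (ρ v) ∧ dist (ρ u) (ρ v) < 2 * R) :
    (#A : ℝ) ≤ (4 * s + 2) ^ 2 := by
  have hsep : (A : Set V).Pairwise fun v w => 2 * R / s ≤ dist (ρ v) (ρ w) := by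
    intro v hv w hw hvw
    obtain ⟨p, hp⟩ := hspan v w hvw
    have hstar := dist_add_dist_le_wlen_of_isAcyclic hG ρ (hA v hv) (hA w hw) hvw p
    rw [div_le_iff₀ hs]
    linarith [(hshell v hv).1, (hshell w hw).1, dist_comm (ρ v) (ρ u)]
  have hr : ∀ v ∈ A, dist (ρ v) (ρ u) ≤ 2 * R := fun v hv =>
    (dist_comm (ρ v) (ρ u)).trans_le (hshell v hv).2.le
  have := card_le_of_pairwise_le_dist A ρ (ρ u) (by positivity) hr hsep
  rwa [show 4 * (2 * R) / (2 * R / s) = 4 * s by field_simp] at this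

lemma Nat.floor_div_mul_floor_le {x : ℝ} (hx : 0 ≤ x) (y : ℝ) :
    (⌊x / y⌋₊ * ⌊y⌋₊ : ℝ) ≤ x := by
  rcases le_or_gt y 0 with hy | hy
  · rw [Nat.floor_of_nonpos hy, Nat.cast_zero, mul_zero]
    exact hx
  · calc (⌊x / y⌋₊ * ⌊y⌋₊ : ℝ) ≤ x / y * y :=
          mul_le_mul (Nat.floor_le (by positivity)) (Nat.floor_le hy.le) (by positivity)
            (by positivity)
      _ = x := div_mul_cancel₀ x hy.ne'

/-- Any straight-line drawing with spanning ratio at most `s ≥ 1` of a tree with a vertex of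
degree `d` has edge-length ratio at least `2^⌊(d-1)/(48·s²)⌋`: some edge is at least that
factor longer than some other edge. -/
theorem tree_spanning_ratio_edge_length_ratio_lower_bound
    {V : Type*} [Fintype V] (G : SimpleGraph V)
    (htree : G.Connected ∧ G.IsAcyclic)
    (u_T : V) (d : ℕ) (hd : 1 ≤ d) (hdeg : (G.neighborSet u_T).ncard = d)
    (ρ : V → EuclideanSpace ℝ (Fin 2)) (hinj : Function.Injective ρ)
    (s : ℝ) (hs : 1 ≤ s)
    (hspan : ∀ u v : V, u ≠ v → ∃ p : G.Walk u v, wlen ρ p ≤ s * dist (ρ u) (ρ v)) :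
    ∃ a b c e : V, G.Adj a b ∧ G.Adj c e ∧
      (2 : ℝ) ^ ⌊((d : ℝ) - 1) / (48 * s ^ 2)⌋₊ * dist (ρ c) (ρ e) ≤ dist (ρ a) (ρ b) := by
  classical
  set A := G.neighborFinset u_T
  have hA : #A = d := by rw [← hdeg, Set.ncard_eq_toFinset_card']; rfl
  have hA0 : A.Nonempty := card_pos.mp (by omega)
  set f : V → ℝ := fun v => dist (ρ u_T) (ρ v)
  obtain ⟨e, he, hmin⟩ := A.exists_min_image f hA0
  obtain ⟨b, hb, hmax⟩ := A.exists_max_image f hA0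
  rw [mem_neighborFinset] at he hb
  refine ⟨u_T, b, u_T, e, hb, he, ?_⟩
  by_contra! hlt
  have hm : 0 < f e := dist_pos.mpr (hinj.ne he.ne)
  have hcount : ⌊((d : ℝ) - 1) / (48 * s ^ 2)⌋₊ * ⌊48 * s ^ 2⌋₊ < #A := by
    have := Nat.floor_div_mul_floor_le (x := (d : ℝ) - 1) (by simp [hd]) (48 * s ^ 2)
    rw [hA]
    exact_mod_cast this.trans_lt (sub_one_lt _)
  obtain ⟨R, hR, hshell⟩ := exists_dyadic_shell_card_gt f hm _ A
    (fun v hv => ⟨hmin v hv, (hmax v hv).trans_lt hlt⟩) hcount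
  have hfew := card_neighbors_in_dyadic_shell_le htree.2 ρ (by positivity) hspan
    {v ∈ A | R ≤ f v ∧ f v < 2 * R}
    (fun v hv => (mem_neighborFinset _ _ _).mp (mem_filter.mp hv).1) hR
    (fun v hv => (mem_filter.mp hv).2)
  have hmany : 48 * s ^ 2 < #{v ∈ A | R ≤ f v ∧ f v < 2 * R} :=
    (Nat.floor_lt (by positivity)).mp hshell
  have hs36 : (4 * s + 2) ^ 2 < 48 * s ^ 2 := by nlinarith
  linarith
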